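/- For every n ≥ 2, the graph H_n is both a local amoeba and a global amoeba, has minimum degree 1, has exactly ⌊n²/4⌋ edges, and has clique number ⌊n/2⌋ + 1. Here H_n is the graph on vertex set A ∪ B with A = {v_1,...,v_q}, q = ⌊n/2⌋, and B = {v_{q+1},...,v_n}, where B is a clique, A is an independent set, and v_i v_{q+j} ∈ E(H_n) if and only if j ≤ i. Equivalently, H_n is the unique graph of order n whose degree set, with multiplicity, realizes every degree in {1,...,n−1} (with ⌊n/2⌋ repeated), satisfying H_n ≅ complement of (H_{n−1} ∪ K_1). -/

import Mathlib

open SimpleGraph Equiv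

/-- The labeled copy `G_σ`, with edges `v_{σ⁻¹ i} v_{σ⁻¹ j}` for edges `v_i v_j` of `G`. -/
def copyG {V : Type*} (G : SimpleGraph V) (σ : Equiv.Perm V) : SimpleGraph V where
  Adj a b := G.Adj (σ a) (σ b)
  symm := ⟨fun _ _ h => G.symm.symm _ _ h⟩
  loopless := ⟨fun _ h => G.loopless.irrefl _ h⟩

/-- The graph `G - v_r v_s + v_k v_l`. -/
def replaceG {V : Type*} (G : SimpleGraph V) (r s k l : V) : SimpleGraph V :=
  SimpleGraph.fromEdgeSet ((G.edgeSet \ {s(r, s)}) ∪ {s(k, l)})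

/-- The edge-replacement `rs → kl` is feasible: `v_r v_s ∈ E(G)`, `v_k v_l` is a non-edge or
`{k,l} = {r,s}`, and `G - v_r v_s + v_k v_l ≅ G`. -/
def IsFeasible {V : Type*} (G : SimpleGraph V) (r s k l : V) : Prop :=
  G.Adj r s ∧ (Gᶜ.Adj k l ∨ s(k, l) = s(r, s)) ∧ Nonempty (replaceG G r s k l ≃g G)

/-- The permutations realizing feasible edge-replacements of `G`. -/
def feasiblePerms {V : Type*} (G : SimpleGraph V) : Set (Equiv.Perm V) :=
  {σ | ∃ r s k l, IsFeasible G r s k l ∧ copyG G σ = replaceG G r s k l}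

/-- The group `S_G` generated by all permutations realizing feasible edge-replacements. -/
def ampGroup {V : Type*} (G : SimpleGraph V) : Subgroup (Equiv.Perm V) :=
  Subgroup.closure (feasiblePerms G)

/-- `G` is a local amoeba if `S_G` is the full symmetric group. -/
def LocalAmoeba {V : Type*} (G : SimpleGraph V) : Prop := ampGroup G = ⊤

/-- Disjoint union of two graphs. -/
def sumGraph {V W : Type*} (H : SimpleGraph V) (H' : SimpleGraph W) : SimpleGraph (V ⊕ W) :=
  SimpleGraph.map Sum.inl H ⊔ SimpleGraph.map Sum.inr H'

/-- `G` together with `t` additional isolated vertices. -/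
def addIsolated {V : Type*} (G : SimpleGraph V) (t : ℕ) : SimpleGraph (V ⊕ Fin t) :=
  sumGraph G (⊥ : SimpleGraph (Fin t))

/-- `G` is a global amoeba if `G ∪ tK₁` is a local amoeba for all sufficiently large `t`. -/
def GlobalAmoeba {V : Type*} (G : SimpleGraph V) : Prop :=
  ∃ T : ℕ, ∀ t ≥ T, LocalAmoeba (addIsolated G t)

/-- The graph `H_n`: with `q = ⌊n/2⌋`, the vertices with indices `< q` (this is `A`, where
index `i-1` stands for `v_i`) form an independent set, the vertices with indices `≥ q`
(this is `B`, where index `q+j-1` stands for `v_{q+j}`) form a clique, and `v_i v_{q+j}`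
is an edge iff `j ≤ i`, i.e. a vertex `a ∈ A` and a vertex `b ∈ B` are adjacent
iff `b.val ≤ a.val + q`. -/
def Hgraph (n : ℕ) : SimpleGraph (Fin n) where
  Adj a b := a ≠ b ∧
    ((n / 2 ≤ a.val ∧ n / 2 ≤ b.val) ∨
     (a.val < n / 2 ∧ n / 2 ≤ b.val ∧ b.val ≤ a.val + n / 2) ∨
     (b.val < n / 2 ∧ n / 2 ≤ a.val ∧ a.val ≤ b.val + n / 2))
  symm := by
    refine ⟨?_⟩
    rintro a b ⟨h1, h2⟩
    exact ⟨fun e => h1 e.symm, by tauto⟩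
  loopless := ⟨fun a h => h.1 rfl⟩

instance (n : ℕ) : DecidableRel (Hgraph n).Adj := fun a b =>
  inferInstanceAs (Decidable (a ≠ b ∧
    ((n / 2 ≤ a.val ∧ n / 2 ≤ b.val) ∨
     (a.val < n / 2 ∧ n / 2 ≤ b.val ∧ b.val ≤ a.val + n / 2) ∨
     (b.val < n / 2 ∧ n / 2 ≤ a.val ∧ a.val ≤ b.val + n / 2))))

/-!
If `x z` is an edge, `y z` is not, and `x`, `y` have the same neighbours outside `{x, y, z}`,
then relabelling by the transposition `(x y)` turns `G` into `G - xz + yz`, so `(x y)` realizes a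
feasible edge-replacement. Listing the vertices of `H_n` as
`v_1, …, v_q, v_n, v_{n-1}, …, v_{q+1}` (in order of degree), any two consecutive ones are of
this kind, except `v_q, v_n`, which are twins, so that their transposition is an automorphism.
These transpositions connect all vertices, hence generate `S_n`. After adding isolated vertices,
`v_1`, whose only neighbour is `v_{q+1}`, is related in the same way to each isolated vertex.

The isomorphism `H_n ≅ (H_{n-1} ∪ K_1)ᶜ` gives `e(H_n) + e(H_{n-1}) = n choose 2`, whence
`e(H_n) = ⌊n²/4⌋` by induction. A clique meets the independent set `A` at most once, and
`v_i ∈ A` has only `i ≤ q` neighbours in `B`, so `ω(H_n) ≤ q + 1`; the vertices with index at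
least `n - 1 - q` form a clique of that size.
-/

open Finset Relation

section EdgeReplacement

variable {V : Type*} (G : SimpleGraph V)

lemma replaceG_adj (r s k l a b : V) :
    (replaceG G r s k l).Adj a b ↔
      ((G.Adj a b ∧ s(a, b) ≠ s(r, s)) ∨ s(a, b) = s(k, l)) ∧ a ≠ b := by
  simp only [replaceG, fromEdgeSet_adj, Set.mem_union, Set.mem_sdiff, Set.mem_singleton_iff,
    mem_edgeSet, ne_eq]

lemma replaceG_self {r s : V} (h : G.Adj r s) : replaceG G r s r s = G := by
  rw [replaceG, Set.sdiff_union_self, Set.union_singleton,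
    Set.insert_eq_of_mem ((mem_edgeSet G).2 h), fromEdgeSet_edgeSet]

def copyGIso (σ : Perm V) : copyG G σ ≃g G :=
  ⟨σ, Iff.rfl⟩

lemma mem_feasiblePerms_of_copyG_eq_self {σ : Perm V} {r s : V} (h : G.Adj r s)
    (hσ : copyG G σ = G) : σ ∈ feasiblePerms G :=
  ⟨r, s, r, s, ⟨h, Or.inr rfl, ⟨(replaceG_self G h).symm ▸ Iso.refl⟩⟩,
    by rw [hσ, replaceG_self G h]⟩

lemma copyG_swap_eq_replaceG [DecidableEq V] {x y z : V} (hzy : z ≠ y) (hxz : G.Adj x z)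
    (hyz : ¬G.Adj y z) (hsame : ∀ w, w ≠ x → w ≠ y → w ≠ z → (G.Adj x w ↔ G.Adj y w)) :
    copyG G (swap x y) = replaceG G x z y z := by
  have hxy : x ≠ y := by rintro rfl; exact hyz hxz
  ext a b
  simp only [copyG, replaceG_adj, swap_apply_def, Sym2.eq_iff]
  grind [SimpleGraph.adj_comm, SimpleGraph.irrefl]

lemma swap_mem_feasiblePerms [DecidableEq V] {x y z : V} (hzy : z ≠ y) (hxz : G.Adj x z)
    (hyz : ¬G.Adj y z) (hsame : ∀ w, w ≠ x → w ≠ y → w ≠ z → (G.Adj x w ↔ G.Adj y w)) :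
    swap x y ∈ feasiblePerms G := by
  have h := copyG_swap_eq_replaceG G hzy hxz hyz hsame
  exact ⟨x, z, y, z, ⟨hxz, Or.inl ((compl_adj G y z).2 ⟨hzy.symm, hyz⟩), ⟨h ▸ copyGIso G _⟩⟩, h⟩

end EdgeReplacement

section Swaps

variable {α : Type*} [DecidableEq α] {H : Subgroup (Perm α)}

lemma swap_mem_trans {x y z : α} (hxy : swap x y ∈ H) (hyz : swap y z ∈ H) : swap x z ∈ H := by
  rcases eq_or_ne x y with rfl | hxy'
  · exact hyz
  rcases eq_or_ne x z with rfl | hxz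
  · rw [swap_self]; exact H.one_mem
  rw [swap_comm, ← swap_mul_swap_mul_swap hxy' hxz]
  exact H.mul_mem (H.mul_mem hyz hxy) hyz

lemma swap_mem_of_reflTransGen {x y : α} (h : ReflTransGen (fun a b => swap a b ∈ H) x y) :
    swap x y ∈ H := by
  induction h with
  | refl => rw [swap_self]; exact H.one_mem
  | tail _ hbc ih => exact swap_mem_trans ih hbc

lemma eq_top_of_forall_swap_mem [Finite α] (x₀ : α) (h : ∀ y, swap x₀ y ∈ H) : H = ⊤ := by
  rw [eq_top_iff, ← Perm.closure_isSwap, Subgroup.closure_le]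
  rintro _ ⟨a, b, -, rfl⟩
  exact swap_mem_trans (swap_comm a x₀ ▸ h a) (h b)

end Swaps

section Isolated

variable {V : Type*} (G : SimpleGraph V) (t : ℕ)

@[simp] lemma addIsolated_adj_inl_inl (a b : V) :
    (addIsolated G t).Adj (Sum.inl a) (Sum.inl b) ↔ G.Adj a b := by
  simpa [addIsolated, sumGraph, map_adj'] using fun h => h.ne

@[simp] lemma not_addIsolated_adj_inl_inr (a : V) (c : Fin t) :
    ¬(addIsolated G t).Adj (Sum.inl a) (Sum.inr c) := by
  simp [addIsolated, sumGraph, map_adj']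

@[simp] lemma not_addIsolated_adj_inr (c : Fin t) (b : V ⊕ Fin t) :
    ¬(addIsolated G t).Adj (Sum.inr c) b := by
  cases b <;> simp [addIsolated, sumGraph, map_adj']

lemma copyG_addIsolated_sumCongr (σ : Perm V) :
    copyG (addIsolated G t) (σ.sumCongr 1) = addIsolated (copyG G σ) t := by
  ext (a | a) (b | b) <;> simp [copyG]

lemma replaceG_addIsolated_inl (r s k l : V) :
    replaceG (addIsolated G t) (.inl r) (.inl s) (.inl k) (.inl l) =
      addIsolated (replaceG G r s k l) t := by
  ext (a | a) (b | b) <;> simp [replaceG_adj]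

lemma sumCongr_mem_feasiblePerms_addIsolated {σ : Perm V} (h : σ ∈ feasiblePerms G) :
    σ.sumCongr 1 ∈ feasiblePerms (addIsolated G t) := by
  obtain ⟨r, s, k, l, ⟨hrs, hkl, -⟩, hσ⟩ := h
  have h : copyG (addIsolated G t) (σ.sumCongr 1) =
      replaceG (addIsolated G t) (.inl r) (.inl s) (.inl k) (.inl l) := by
    rw [copyG_addIsolated_sumCongr, hσ, replaceG_addIsolated_inl]
  refine ⟨.inl r, .inl s, .inl k, .inl l,
    ⟨(addIsolated_adj_inl_inl G t r s).2 hrs, ?_, ⟨h ▸ copyGIso _ _⟩⟩, h⟩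
  simpa [compl_adj, Sym2.eq_iff] using hkl

lemma card_edgeFinset_addIsolated [Fintype V] [DecidableRel G.Adj]
    [Fintype (addIsolated G t).edgeSet] :
    #(addIsolated G t).edgeFinset = #G.edgeFinset := by
  classical
  have h : addIsolated G t = G.map .inl := by
    rw [addIsolated, sumGraph, sup_eq_left]
    rintro _ _ ⟨-, _, _, ⟨⟩, -⟩
  convert card_edgeFinset_map (.inl : V ↪ V ⊕ Fin t) G using 3
  exact h

end Isolated

lemma card_edgeFinset_compl {V : Type*} [Fintype V] [DecidableEq V] (G : SimpleGraph V)
    [DecidableRel G.Adj] :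
    #Gᶜ.edgeFinset = (Fintype.card V).choose 2 - #G.edgeFinset := by
  rw [← card_edgeFinset_top_eq_card_choose_two, ← card_sdiff_of_subset (edgeFinset_mono le_top),
    ← edgeFinset_sdiff]
  exact congrArg _ (edgeFinset_inj.2 top_sdiff.symm)

lemma sq_div_four_add_succ_sq_div_four (n : ℕ) :
    n ^ 2 / 4 + (n + 1) ^ 2 / 4 = (n + 1).choose 2 := by
  rw [Nat.choose_two_right, Nat.add_sub_cancel]
  obtain ⟨m, rfl | rfl⟩ := Nat.even_or_odd' n
  · rw [show (2 * m) ^ 2 = 4 * (m * m) by ring, show (2 * m + 1) ^ 2 = 4 * (m * m + m) + 1 by ring,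
      show (2 * m + 1) * (2 * m) = 2 * (2 * (m * m) + m) by ring]
    omega
  · rw [show (2 * m + 1) ^ 2 = 4 * (m * m + m) + 1 by ring,
      show (2 * m + 1 + 1) ^ 2 = 4 * (m * m + 2 * m + 1) by ring,
      show (2 * m + 1 + 1) * (2 * m + 1) = 2 * (2 * (m * m) + 3 * m + 1) by ring]
    omega

lemma card_le_of_forall_val_mem_Ico {n a b : ℕ} {s : Finset (Fin n)}
    (h : ∀ v ∈ s, v.val ∈ Ico a b) : #s ≤ b - a := by
  simpa using card_le_card_of_injOn Fin.val h Fin.val_injective.injOn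

section Hgraph

variable {n : ℕ}

lemma hgraph_adj {a b : Fin n} : (Hgraph n).Adj a b ↔ a.val ≠ b.val ∧
    ((n / 2 ≤ a.val ∧ n / 2 ≤ b.val) ∨
     (a.val < n / 2 ∧ n / 2 ≤ b.val ∧ b.val ≤ a.val + n / 2) ∨
     (b.val < n / 2 ∧ n / 2 ≤ a.val ∧ a.val ≤ b.val + n / 2)) := by
  rw [Fin.val_ne_iff]
  rfl

lemma swap_mem_feasiblePerms_hgraph_of_lt {i : ℕ} (hi : i + 1 < n / 2) :
    swap (⟨i, by omega⟩ : Fin n) ⟨i + 1, by omega⟩ ∈ feasiblePerms (Hgraph n) := by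
  rw [swap_comm]
  refine swap_mem_feasiblePerms _ (z := ⟨n / 2 + i + 1, by omega⟩) ?_ ?_ ?_ fun w => ?_ <;>
    simp only [ne_eq, Fin.ext_iff, hgraph_adj] <;> omega

lemma swap_mem_feasiblePerms_hgraph_of_le {b : ℕ} (hb : n / 2 ≤ b) (hbn : b + 1 < n) :
    swap (⟨b, by omega⟩ : Fin n) ⟨b + 1, hbn⟩ ∈ feasiblePerms (Hgraph n) := by
  refine swap_mem_feasiblePerms _ (z := ⟨b - n / 2, by omega⟩) ?_ ?_ ?_ fun w => ?_ <;>
    simp only [ne_eq, Fin.ext_iff, hgraph_adj] <;> omega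

lemma copyG_hgraph_swap (hn : 2 ≤ n) :
    copyG (Hgraph n) (swap ⟨n / 2 - 1, by omega⟩ ⟨n - 1, by omega⟩) = Hgraph n := by
  ext a b
  simp only [copyG, swap_apply_def]
  split_ifs <;> simp only [hgraph_adj, Fin.ext_iff] at * <;> omega

lemma reflTransGen_swap_hgraph (hn : 2 ≤ n) (v : Fin n) :
    ReflTransGen (fun a b => swap a b ∈ feasiblePerms (Hgraph n)) ⟨0, by omega⟩ v := by
  have hA : ∀ i (hi : i < n / 2), ReflTransGen (fun a b => swap a b ∈ feasiblePerms (Hgraph n))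
      ⟨0, by omega⟩ ⟨i, by omega⟩ := by
    intro i
    induction i with
    | zero => exact fun _ => .refl
    | succ i ih => exact fun hi => (ih (by omega)).tail (swap_mem_feasiblePerms_hgraph_of_lt hi)
  have hB : ∀ d (hd : d < n - n / 2), ReflTransGen (fun a b => swap a b ∈ feasiblePerms (Hgraph n))
      ⟨0, by omega⟩ ⟨n - 1 - d, by omega⟩ := by
    intro d
    induction d with
    | zero =>
      refine fun _ => (hA (n / 2 - 1) (by omega)).tail ?_
      exact mem_feasiblePerms_of_copyG_eq_self _ (r := ⟨0, by omega⟩) (s := ⟨n / 2, by omega⟩)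
        (by simp only [hgraph_adj]; omega) (copyG_hgraph_swap hn)
    | succ d ih =>
      refine fun hd => (ih (by omega)).tail ?_
      rw [swap_comm]
      convert swap_mem_feasiblePerms_hgraph_of_le (n := n) (b := n - 2 - d) (by omega) (by omega)
        using 3 <;> omega
  obtain ⟨v, hv⟩ := v
  rcases lt_or_ge v (n / 2) with h | h
  · exact hA v h
  · convert hB (n - 1 - v) (by omega)
    omega

lemma localAmoeba_hgraph (hn : 2 ≤ n) : LocalAmoeba (Hgraph n) :=
  eq_top_of_forall_swap_mem _ fun v =>
    swap_mem_of_reflTransGen <|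
      ReflTransGen.mono (fun _ _ h => Subgroup.subset_closure h) _ _ (reflTransGen_swap_hgraph hn v)

lemma swap_inl_zero_inr_mem_feasiblePerms (hn : 2 ≤ n) {t : ℕ} (c : Fin t) :
    swap (.inl ⟨0, by omega⟩ : Fin n ⊕ Fin t) (.inr c) ∈
      feasiblePerms (addIsolated (Hgraph n) t) := by
  refine swap_mem_feasiblePerms _ (z := .inl ⟨n / 2, by omega⟩) (by simp) ?_ (by simp) ?_
  · simp only [addIsolated_adj_inl_inl, hgraph_adj]
    omega
  · rintro (w | w) hw0 - hwq
    · simp only [addIsolated_adj_inl_inl, hgraph_adj, not_addIsolated_adj_inr, iff_false]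
      simp only [ne_eq, Sum.inl.injEq, Fin.ext_iff] at hw0 hwq
      omega
    · simp

lemma globalAmoeba_hgraph (hn : 2 ≤ n) : GlobalAmoeba (Hgraph n) := by
  refine ⟨0, fun t _ => eq_top_of_forall_swap_mem (.inl ⟨0, by omega⟩) ?_⟩
  rintro (v | c)
  · refine swap_mem_of_reflTransGen ((reflTransGen_swap_hgraph hn v).lift Sum.inl fun a b h => ?_)
    show swap (Sum.inl a) (Sum.inl b) ∈ _
    rw [← Perm.sumCongr_swap_one]
    exact Subgroup.subset_closure (sumCongr_mem_feasiblePerms_addIsolated _ t h)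
  · exact Subgroup.subset_closure (swap_inl_zero_inr_mem_feasiblePerms hn c)

lemma degree_hgraph_zero (hn : 2 ≤ n) : (Hgraph n).degree ⟨0, by omega⟩ = 1 := by
  rw [← card_neighborFinset_eq_degree, card_eq_one]
  refine ⟨⟨n / 2, by omega⟩, ?_⟩
  ext w
  simp only [mem_neighborFinset, hgraph_adj, mem_singleton, Fin.ext_iff]
  omega

lemma degree_hgraph_pos (hn : 2 ≤ n) (v : Fin n) : 0 < (Hgraph n).degree v := by
  rw [degree_pos_iff_exists_adj]
  by_cases hv : v.val = n / 2
  · exact ⟨⟨0, by omega⟩, by simp only [hgraph_adj]; omega⟩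
  · exact ⟨⟨n / 2, by omega⟩, by simp only [hgraph_adj]; omega⟩

-- Reading `Sum.inr 0` as the index `n - 1`, this is the rotation `i ↦ i + n / 2 + 1` of `Fin n`.
def complAddIsolatedHgraphFun (hn : 0 < n) : Fin (n - 1) ⊕ Fin 1 → Fin n
  | .inl w =>
    ⟨if w.val < (n - 1) / 2 then w + n / 2 + 1 else w - (n - 1) / 2, by split_ifs <;> omega⟩
  | .inr _ => ⟨n / 2, by omega⟩

lemma complAddIsolatedHgraphFun_injective (hn : 0 < n) :
    Function.Injective (complAddIsolatedHgraphFun hn) := by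
  rintro (a | a) (b | b) h <;>
    simp only [complAddIsolatedHgraphFun, Fin.ext_iff, Sum.inl.injEq, Fin.fin_one_eq_zero]
      at h ⊢ <;>
    (try split_ifs at h) <;> omega

noncomputable def complAddIsolatedHgraphIso (hn : 0 < n) :
    (addIsolated (Hgraph (n - 1)) 1)ᶜ ≃g Hgraph n where
  toEquiv := .ofBijective _ <| (Fintype.bijective_iff_injective_and_card _).2
    ⟨complAddIsolatedHgraphFun_injective hn, by simp; omega⟩
  map_rel_iff' {a b} := by
    rcases a with a | a <;> rcases b with b | b <;> have := a.isLt <;> have := b.isLt <;>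
      simp only [Equiv.ofBijective_apply, complAddIsolatedHgraphFun, compl_adj, hgraph_adj,
        addIsolated_adj_inl_inl, not_addIsolated_adj_inl_inr, not_addIsolated_adj_inr,
        Fin.fin_one_eq_zero] <;>
      (try split_ifs) <;> simp only [ne_eq, Sum.inl.injEq, Fin.ext_iff, reduceCtorEq,
        not_false_eq_true, not_true_eq_false, and_self, false_and, iff_true] <;> omega

lemma card_edgeFinset_hgraph_add_pred (hn : 0 < n) :
    #(Hgraph n).edgeFinset + #(Hgraph (n - 1)).edgeFinset = n.choose 2 := by
  classical
  have h := (complAddIsolatedHgraphIso hn).card_edgeFinset_eq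
  rw [card_edgeFinset_compl, card_edgeFinset_addIsolated, Fintype.card_sum, Fintype.card_fin,
    Fintype.card_fin, Nat.sub_add_cancel hn] at h
  have := card_edgeFinset_le_card_choose_two (G := Hgraph (n - 1))
  rw [Fintype.card_fin] at this
  have := Nat.choose_le_choose 2 (n.sub_le 1)
  omega

lemma card_edgeFinset_hgraph (hn : 0 < n) : #(Hgraph n).edgeFinset = n ^ 2 / 4 := by
  induction n, hn using Nat.le_induction with
  | base => simpa using card_edgeFinset_le_card_choose_two (G := Hgraph 1)
  | succ m hm ih =>
    have h := card_edgeFinset_hgraph_add_pred (n := m + 1) (by omega)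
    rw [Nat.add_sub_cancel, ih, ← sq_div_four_add_succ_sq_div_four] at h
    omega

lemma cliqueNum_hgraph_le : (Hgraph n).cliqueNum ≤ n / 2 + 1 := by
  obtain ⟨s, hs⟩ := exists_isNClique_cliqueNum (G := Hgraph n)
  rw [← hs.card_eq]
  by_cases hA : ∃ a ∈ s, a.val < n / 2
  · obtain ⟨a, ha, haq⟩ := hA
    have h : #(s.erase a) ≤ a + 1 := by
      refine (card_le_of_forall_val_mem_Ico (a := n / 2) (b := a + n / 2 + 1) fun v hv => ?_).trans
        (by omega)
      obtain ⟨hva, hvs⟩ := mem_erase.1 hv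
      have := hs.isClique ha hvs (Ne.symm hva)
      rw [hgraph_adj] at this
      rw [mem_Ico]
      omega
    have := card_erase_add_one ha
    omega
  · simp only [not_exists, not_and, not_lt] at hA
    exact (card_le_of_forall_val_mem_Ico fun v hv => mem_Ico.2 ⟨hA v hv, v.isLt⟩).trans (by omega)

lemma le_cliqueNum_hgraph (hn : 0 < n) : n / 2 + 1 ≤ (Hgraph n).cliqueNum := by
  have hclique : (Hgraph n).IsClique
      ((Ico (n - 1 - n / 2) n).attachFin fun _ h => (mem_Ico.1 h).2 : Set (Fin n)) := by
    intro x hx y hy hxy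
    simp only [mem_coe, mem_attachFin, mem_Ico] at hx hy
    rw [hgraph_adj]
    omega
  have := hclique.card_le_cliqueNum
  rw [card_attachFin, Nat.card_Ico] at this
  omega

end Hgraph

theorem stmt18 (n : ℕ) (hn : 2 ≤ n) :
    LocalAmoeba (Hgraph n) ∧ GlobalAmoeba (Hgraph n) ∧
    (∃ v : Fin n, (Hgraph n).degree v = 1) ∧ (∀ v : Fin n, 1 ≤ (Hgraph n).degree v) ∧
    (Hgraph n).edgeFinset.card = n ^ 2 / 4 ∧
    (Hgraph n).cliqueNum = n / 2 + 1 ∧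
    Nonempty (Hgraph n ≃g (addIsolated (Hgraph (n - 1)) 1)ᶜ) :=
  ⟨localAmoeba_hgraph hn, globalAmoeba_hgraph hn, ⟨_, degree_hgraph_zero hn⟩,
    degree_hgraph_pos hn, card_edgeFinset_hgraph (by omega),
    cliqueNum_hgraph_le.antisymm (le_cliqueNum_hgraph (by omega)),
    ⟨(complAddIsolatedHgraphIso (by omega)).symm⟩⟩
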